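/- Let N be a natural number and p, λ, β, ω real numbers with 1 < p < N, λ > 0, β > 0, ω > 0. Let φ, g : ℝ → ℝ with φ continuously differentiable on [1,∞), φ(r) > 0 for all r ≥ 1, g continuous on [1,∞) with g(r) > 0 for all r ≥ 1, F satisfying the radial eigenvalue ODE on (1,∞), the Robin condition φ'(1) = β^(1/(p−1))·φ(1), and r_* > 1 with φ'(r_*) = 0. Assume moreover that r ↦ r^(N−1)·g(r) is Lebesgue integrable on (1,∞) with I_g := ∫_1^∞ r^(N−1)·g(r) dr, that r ↦ r^(N−1)·g(r)·φ(r)^p is Lebesgue integrable on (1,∞), and that ω·∫_1^∞ r^(N−1)·g(r)·φ(r)^p dr = 1. Then φ(1) ≥ (ω·I_g)^(−1/p) / (1 + ((p−1)/(N−p))·β^(1/(p−1))). -/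

import Mathlib

open Real Set MeasureTheory

/-! Along the ODE, `F` is nonincreasing on `[1, ∞)`. Where `φ' ≥ 0` this gives
`r^(N-1) φ'(r)^(p-1) = F(r) ≤ F(1) = φ'(1)^(p-1)`, i.e. `φ'(r) ≤ φ'(1) r^(-(N-1)/(p-1))`, and the
same bound holds trivially where `φ' < 0`. Integrating it from `1` and using the Robin condition
bounds `φ` on `[1, ∞)` by `M = φ(1) (1 + (p-1)/(N-p) β^(1/(p-1)))`, so the normalization gives
`1 ≤ ω I_g M^p`, that is `(ω I_g)^(-1/p) ≤ M`. -/

/-- The radial quantity `F(r) = r^(N-1) |φ'(r)|^(p-2) φ'(r)`, written with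
real exponents via the sign function. -/
noncomputable def radialF (N : ℕ) (p : ℝ) (φ : ℝ → ℝ) (r : ℝ) : ℝ :=
  r ^ ((N : ℝ) - 1) * Real.sign (deriv φ r) * |deriv φ r| ^ (p - 1)

theorem sign_mul_abs_rpow_of_nonneg {d q : ℝ} (hd : 0 ≤ d) (hq : q ≠ 0) :
    Real.sign d * |d| ^ q = d ^ q := by
  rcases hd.eq_or_lt with rfl | hd
  · simp [zero_rpow hq]
  · rw [Real.sign_of_pos hd, abs_of_pos hd, one_mul]

theorem continuous_sign_mul_abs_rpow {q : ℝ} (hq : 0 < q) :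
    Continuous fun d : ℝ => Real.sign d * |d| ^ q := by
  have hsplit : (fun d : ℝ => Real.sign d * |d| ^ q) =
      fun d => if 0 ≤ d then |d| ^ q else -|d| ^ q := by
    funext d
    rcases lt_trichotomy d 0 with hd | rfl | hd
    · simp [Real.sign_of_neg hd, hd.not_ge]
    · simp [zero_rpow hq.ne']
    · simp [Real.sign_of_pos hd, hd.le]
  rw [hsplit]
  have hpow : Continuous fun d : ℝ => |d| ^ q := continuous_abs.rpow_const fun _ => Or.inr hq.le
  exact hpow.if_le hpow.neg continuous_const continuous_id fun d hd => by
    simp [← hd, zero_rpow hq.ne']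

theorem le_add_of_deriv_le_mul_rpow {f : ℝ → ℝ} {K c a : ℝ} (hK : 0 ≤ K) (hc : 0 < c) (ha : 0 < a)
    (hf : ∀ x ≥ a, DifferentiableAt ℝ f x) (hf' : ∀ x ≥ a, deriv f x ≤ K * x ^ (-(c + 1)))
    {x : ℝ} (hx : a ≤ x) : f x ≤ f a + K / c * a ^ (-c) := by
  set B : ℝ → ℝ := fun y => f a + K / c * (a ^ (-c) - y ^ (-c))
  have hB : ∀ y ≥ a, HasDerivAt B (K * y ^ (-(c + 1))) y := fun y hy => by
    refine ((((Real.hasDerivAt_rpow_const (p := -c) (Or.inl (ha.trans_le hy).ne')).const_sub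
      (a ^ (-c))).const_mul (K / c)).const_add (f a)).congr_deriv ?_
    rw [neg_add', sub_eq_add_neg (-c)]
    field_simp
  have hfB : f x ≤ B x := by
    refine image_le_of_deriv_right_le_deriv_boundary (f' := deriv f)
      (B' := fun y => K * y ^ (-(c + 1))) (fun y hy => (hf y hy.1).continuousAt.continuousWithinAt)
      (fun y hy => (hf y hy.1).hasDerivAt.hasDerivWithinAt) (by simp [B])
      (fun y hy => (hB y hy.1).continuousAt.continuousWithinAt) (fun y hy => (hB y hy.1).hasDerivWithinAt) (fun y hy => hf' y hy.1) ⟨hx, le_rfl⟩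
  have : 0 ≤ K / c * x ^ (-c) := by have := ha.trans_le hx; positivity
  simp only [B] at hfB
  linarith

theorem rpow_neg_one_div_le_of_one_le_mul_rpow {A M p : ℝ} (hM : 0 ≤ M) (hp : 0 < p)
    (h : 1 ≤ A * M ^ p) : A ^ (-1 / p) ≤ M := by
  have hA : 0 < A := pos_of_mul_pos_left (one_pos.trans_le h) (by positivity)
  calc A ^ (-1 / p) = A⁻¹ ^ (1 / p) := by rw [neg_div, rpow_neg hA.le, inv_rpow hA.le]
    _ ≤ (M ^ p) ^ (1 / p) := by
      gcongr
      rwa [inv_le_iff_one_le_mul₀' hA]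
    _ = M := by rw [← rpow_mul hM, mul_one_div_cancel hp.ne', rpow_one]

section radialF

variable {N : ℕ} {p : ℝ} {φ : ℝ → ℝ}

theorem radialF_eq_mul_sign_mul_abs_rpow (r : ℝ) :
    radialF N p φ r = r ^ ((N : ℝ) - 1) * (Real.sign (deriv φ r) * |deriv φ r| ^ (p - 1)) :=
  mul_assoc _ _ _

theorem radialF_of_deriv_nonneg (hp : 1 < p) {r : ℝ} (hd : 0 ≤ deriv φ r) :
    radialF N p φ r = r ^ ((N : ℝ) - 1) * deriv φ r ^ (p - 1) := by
  rw [radialF_eq_mul_sign_mul_abs_rpow, sign_mul_abs_rpow_of_nonneg hd (by linarith)]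

theorem continuousOn_radialF (hp : 1 < p) {s : Set ℝ} (h0 : (0 : ℝ) ∉ s)
    (hφ : ContinuousOn (deriv φ) s) : ContinuousOn (radialF N p φ) s := by
  have hpow : ContinuousOn (fun r : ℝ => r ^ ((N : ℝ) - 1)) s :=
    continuousOn_id.rpow_const fun r hr => Or.inl (ne_of_mem_of_not_mem hr h0)
  exact (hpow.mul ((continuous_sign_mul_abs_rpow (q := p - 1) (by linarith)).comp_continuousOn
    hφ)).congr fun r _ => radialF_eq_mul_sign_mul_abs_rpow r

theorem deriv_le_of_radialF_le (hp : 1 < p) {r s : ℝ} (hr : 0 < r) (hs : 0 < s)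
    (hdr : 0 ≤ deriv φ r) (hF : radialF N p φ s ≤ radialF N p φ r) :
    deriv φ s ≤ deriv φ r * (r / s) ^ (((N : ℝ) - 1) / (p - 1)) := by
  have hp1 : 0 < p - 1 := by linarith
  have hrs : 0 < r / s := div_pos hr hs
  rcases lt_or_ge (deriv φ s) 0 with hds | hds
  · exact hds.le.trans (by positivity)
  rw [radialF_of_deriv_nonneg hp hds, radialF_of_deriv_nonneg hp hdr] at hF
  have key : deriv φ s ^ (p - 1) ≤ (deriv φ r * (r / s) ^ (((N : ℝ) - 1) / (p - 1))) ^ (p - 1) := by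
    rw [mul_rpow hdr (by positivity), ← rpow_mul hrs.le, div_mul_cancel₀ _ hp1.ne',
      div_rpow hr.le hs.le, mul_div_assoc', le_div_iff₀ (rpow_pos_of_pos hs _)]
    linarith
  exact (rpow_le_rpow_iff hds (by positivity) hp1).mp key

theorem antitoneOn_radialF {a : ℝ} (hp : 1 < p) (ha : 0 < a)
    (hφ : ContinuousOn (deriv φ) (Ici a)) {F' : ℝ → ℝ}
    (hF : ∀ r > a, HasDerivAt (radialF N p φ) (F' r) r) (hF' : ∀ r > a, F' r ≤ 0) :
    AntitoneOn (radialF N p φ) (Ici a) := by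
  refine antitoneOn_of_hasDerivWithinAt_nonpos (f' := F') (convex_Ici a)
    (continuousOn_radialF hp (fun h => (mem_Ici.mp h).not_gt ha) hφ) (fun r hr => ?_) fun r hr => ?_
  all_goals rw [interior_Ici] at hr
  exacts [(hF r hr).hasDerivWithinAt, hF' r hr]

theorem le_add_div_mul_deriv_of_antitoneOn_radialF (hp : 1 < p) (hpN : p < N)
    (hφ : ∀ r ≥ 1, DifferentiableAt ℝ φ r) (hd1 : 0 ≤ deriv φ 1)
    (hF : AntitoneOn (radialF N p φ) (Ici 1)) {r : ℝ} (hr : 1 ≤ r) :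
    φ r ≤ φ 1 + (p - 1) / ((N : ℝ) - p) * deriv φ 1 := by
  have hp1 : 0 < p - 1 := by linarith
  have hφ' : ∀ s ≥ 1, deriv φ s ≤ deriv φ 1 * s ^ (-(((N : ℝ) - p) / (p - 1) + 1)) := by
    intro s hs
    have hs0 : 0 < s := one_pos.trans_le hs
    convert deriv_le_of_radialF_le hp one_pos hs0 hd1 (hF self_mem_Ici hs hs) using 2
    rw [one_div, inv_rpow hs0.le, ← rpow_neg hs0.le, div_add_one hp1.ne', sub_add_sub_cancel]
  have := le_add_of_deriv_le_mul_rpow hd1 (div_pos (by linarith) hp1) one_pos hφ hφ' hr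
  rw [one_rpow, mul_one] at this
  convert this using 2
  field_simp

end radialF

theorem setIntegral_mul_rpow_le {w f : ℝ → ℝ} {s : Set ℝ} {M p : ℝ} (hs : MeasurableSet s)
    (hw : IntegrableOn w s) (hwf : IntegrableOn (fun r => w r * f r ^ p) s)
    (hw0 : ∀ r ∈ s, 0 ≤ w r) (hf0 : ∀ r ∈ s, 0 ≤ f r) (hfM : ∀ r ∈ s, f r ≤ M) (hp : 0 ≤ p) :
    ∫ r in s, w r * f r ^ p ≤ (∫ r in s, w r) * M ^ p := by
  rw [← integral_mul_const]
  exact setIntegral_mono_on hwf (hw.mul_const _) hs fun r hr =>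
    mul_le_mul_of_nonneg_left (rpow_le_rpow (hf0 r hr) (hfM r hr) hp) (hw0 r hr)

theorem boundary_value_lower_general (N : ℕ) (p lam β ω : ℝ)
    (hp : 1 < p) (hpN : p < N) (hlam : 0 < lam) (hβ : 0 < β) (hω : 0 < ω)
    (φ g : ℝ → ℝ)
    (hφdiff : ∀ r ≥ (1 : ℝ), DifferentiableAt ℝ φ r)
    (hφC1 : ContinuousOn (deriv φ) (Set.Ici 1))
    (hφpos : ∀ r ≥ (1 : ℝ), 0 < φ r)
    (hgpos : ∀ r ≥ (1 : ℝ), 0 < g r)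
    (hODE : ∀ r > (1 : ℝ),
      HasDerivAt (radialF N p φ) (-(lam * r ^ ((N : ℝ) - 1) * g r * φ r ^ (p - 1))) r)
    (hRobin : deriv φ 1 = β ^ (1 / (p - 1)) * φ 1)
    (hIg : IntegrableOn (fun r : ℝ => r ^ ((N : ℝ) - 1) * g r) (Set.Ioi 1))
    (hInt : IntegrableOn (fun r : ℝ => r ^ ((N : ℝ) - 1) * g r * φ r ^ p) (Set.Ioi 1))
    (hNorm : ω * ∫ r in Set.Ioi (1 : ℝ), r ^ ((N : ℝ) - 1) * g r * φ r ^ p = 1) :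
    (ω * ∫ r in Set.Ioi (1 : ℝ), r ^ ((N : ℝ) - 1) * g r) ^ (-(1 : ℝ) / p) /
        (1 + ((p - 1) / ((N : ℝ) - p)) * β ^ (1 / (p - 1))) ≤ φ 1 := by
  have hφ1 := hφpos 1 le_rfl
  have hd1 : 0 < deriv φ 1 := by rw [hRobin]; positivity
  have hF : AntitoneOn (radialF N p φ) (Ici 1) := antitoneOn_radialF hp one_pos hφC1 hODE
    fun r hr => by
      have := hφpos r hr.le
      have := hgpos r hr.le
      have : 0 < r := one_pos.trans hr
      simp only [neg_nonpos]
      positivity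
  set M := φ 1 * (1 + ((p - 1) / ((N : ℝ) - p)) * β ^ (1 / (p - 1)))
  have hφM : ∀ r ∈ Ioi (1 : ℝ), φ r ≤ M := fun r hr => by
    have := le_add_div_mul_deriv_of_antitoneOn_radialF hp hpN hφdiff hd1.le hF hr.le
    rw [hRobin] at this
    linarith
  have hw : ∀ r ∈ Ioi (1 : ℝ), 0 ≤ r ^ ((N : ℝ) - 1) * g r := fun r hr => by
    have := hgpos r hr.le
    have : 0 < r := one_pos.trans hr
    positivity
  have hM : 1 ≤ (ω * ∫ r in Ioi (1 : ℝ), r ^ ((N : ℝ) - 1) * g r) * M ^ p :=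
    calc 1 = ω * ∫ r in Ioi (1 : ℝ), r ^ ((N : ℝ) - 1) * g r * φ r ^ p := hNorm.symm
      _ ≤ ω * ((∫ r in Ioi (1 : ℝ), r ^ ((N : ℝ) - 1) * g r) * M ^ p) :=
        mul_le_mul_of_nonneg_left (setIntegral_mul_rpow_le measurableSet_Ioi hIg hInt
          hw (fun r hr => (hφpos r hr.le).le) hφM (by linarith)) hω.le
      _ = _ := (mul_assoc _ _ _).symm
  have hNp : 0 < (N : ℝ) - p := by linarith
  rw [div_le_iff₀ (by positivity)]
  exact rpow_neg_one_div_le_of_one_le_mul_rpow (by positivity) (by linarith) hM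

/-- Lower bound on the boundary value `φ(1)` in Theorem 1.4(a):
`φ(1) ≥ (ω I_g)^(-1/p) / (1 + ((p-1)/(N-p)) β^(1/(p-1)))`. -/
theorem boundary_value_lower (N : ℕ) (p lam β ω : ℝ)
    (hp : 1 < p) (hpN : p < N) (hlam : 0 < lam) (hβ : 0 < β) (hω : 0 < ω)
    (φ g : ℝ → ℝ)
    (hφdiff : ∀ r ≥ (1 : ℝ), DifferentiableAt ℝ φ r)
    (hφC1 : ContinuousOn (deriv φ) (Set.Ici 1))
    (hφpos : ∀ r ≥ (1 : ℝ), 0 < φ r)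
    (hgcont : ContinuousOn g (Set.Ici 1))
    (hgpos : ∀ r ≥ (1 : ℝ), 0 < g r)
    (hODE : ∀ r > (1 : ℝ),
      HasDerivAt (radialF N p φ) (-(lam * r ^ ((N : ℝ) - 1) * g r * φ r ^ (p - 1))) r)
    (hRobin : deriv φ 1 = β ^ (1 / (p - 1)) * φ 1)
    (rstar : ℝ) (hrstar : 1 < rstar) (hcrit : deriv φ rstar = 0)
    (hIg : IntegrableOn (fun r : ℝ => r ^ ((N : ℝ) - 1) * g r) (Set.Ioi 1))
    (hInt : IntegrableOn (fun r : ℝ => r ^ ((N : ℝ) - 1) * g r * φ r ^ p) (Set.Ioi 1))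
    (hNorm : ω * ∫ r in Set.Ioi (1 : ℝ), r ^ ((N : ℝ) - 1) * g r * φ r ^ p = 1) :
    (ω * ∫ r in Set.Ioi (1 : ℝ), r ^ ((N : ℝ) - 1) * g r) ^ (-(1 : ℝ) / p) /
        (1 + ((p - 1) / ((N : ℝ) - p)) * β ^ (1 / (p - 1))) ≤ φ 1 :=
  boundary_value_lower_general N p lam β ω hp hpN hlam hβ hω φ g hφdiff hφC1 hφpos hgpos hODE hRobin
    hIg hInt hNorm
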